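/- arXiv:1210.8074 — 5 statements merged into one kernel-verified Lean document; each statement's English description precedes it below -/
import Mathlib

section
/- Let P be a topological property that is closed hereditary, preserved under finite closed sums, and satisfies Mrówka's condition (W). Let Q be a topological property that is closed hereditary, satisfies Mrówka's condition (W), and implies complete regularity. If X is a locally-P space that does not have P and has Q, then X has a one-point extension Y (i.e., a space Y containing X as a dense subspace with Y \ X a singleton) having both P and Q. -/
universe u

/-- A topological property: a predicate on topological spaces invariant under homeomorphism. -/
def TopInvariant (P : ∀ (X : Type u) [TopologicalSpace X], Prop) : Prop :=
  ∀ (X Y : Type u) [TopologicalSpace X] [TopologicalSpace Y], X ≃ₜ Y → P X → P Y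

/-- `P` is closed hereditary: any closed subspace of a space with `P` also has `P`. -/
def ClosedHereditary (P : ∀ (X : Type u) [TopologicalSpace X], Prop) : Prop :=
  ∀ (X : Type u) [TopologicalSpace X] (s : Set X), IsClosed s → P X → P s

/-- `P` is preserved under finite closed sums: any space which is a finite union of closed
subspaces each having `P` also has `P`. -/
def PreservedFiniteClosedSums (P : ∀ (X : Type u) [TopologicalSpace X], Prop) : Prop :=
  ∀ (X : Type u) [TopologicalSpace X] (n : ℕ) (F : Fin n → Set X),
    (∀ i, IsClosed (F i)) → (∀ i, P (F i)) → (⋃ i, F i) = Set.univ → P X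

/-- Mrówka's condition (W): if a completely regular space `X` has a point `p` with an open base
`B` for `X` at `p` such that `X \ b` has `P` for every `b ∈ B`, then `X` has `P`. -/
def MrowkaW (P : ∀ (X : Type u) [TopologicalSpace X], Prop) : Prop :=
  ∀ (X : Type u) [TopologicalSpace X] [CompletelyRegularSpace X] (p : X) (B : Set (Set X)),
    (∀ b ∈ B, IsOpen b ∧ p ∈ b) →
    (∀ V ∈ nhds p, ∃ b ∈ B, b ⊆ V) →
    (∀ b ∈ B, P ↥(bᶜ : Set X)) → P X

/-!
Embed `X` in its Stone–Čech compactification `βX` and let `G ⊆ βX` be the open set of points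
having a closed neighbourhood whose trace on `X` has `P`. Since `X` is locally `P`, it lies in `G`,
and by compactness and finite closed sums the trace on `X` of every compact subset of `G` has `P`.
Adjoin to `X` the point at infinity of the one-point compactification of the locally compact
space `G`. Complements of basic neighbourhoods of the new point are then traces of compact subsets
of `G`, hence have `P` (and `Q`, being closed in `X`), so condition (W) applies to both properties;
the new point is not isolated because `X` itself is not `P`.
-/

open Topology Set Filter

section Hereditary

variable {P : ∀ (X : Type u) [TopologicalSpace X], Prop} {X : Type u} [TopologicalSpace X]

theorem ClosedHereditary.of_subset (hPch : ClosedHereditary P) (hPinv : TopInvariant P)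
    {s N : Set X} (hsN : s ⊆ N) (hs : IsClosed s) (hN : P N) : P s :=
  hPinv _ _ (IsEmbedding.subtypeVal.homeomorphOfSubsetRange (by rwa [Subtype.range_coe]))
    (hPch N _ (hs.preimage continuous_subtype_val) hN)

theorem PreservedFiniteClosedSums.biUnion_finset (hPsum : PreservedFiniteClosedSums P)
    (hPinv : TopInvariant P) {ι : Type*} (t : Finset ι) {s : ι → Set X}
    (hcl : ∀ i ∈ t, IsClosed (s i)) (hP : ∀ i ∈ t, P (s i)) : P ↥(⋃ i ∈ t, s i) := by
  set A := ⋃ i ∈ t, s i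
  let idx : Fin t.card → t := t.equivFin.symm
  have hsA : ∀ j, s (idx j) ⊆ range (Subtype.val : A → X) := fun j => by
    rw [Subtype.range_coe]
    exact subset_biUnion_of_mem (idx j).2
  refine hPsum A t.card (fun j => Subtype.val ⁻¹' s (idx j))
    (fun j => (hcl _ (idx j).2).preimage continuous_subtype_val)
    (fun j => hPinv _ _ (IsEmbedding.subtypeVal.homeomorphOfSubsetRange (hsA j)).symm
      (hP _ (idx j).2)) (eq_univ_of_forall fun a => ?_)
  obtain ⟨k, hk, hak⟩ := mem_iUnion₂.1 a.2
  exact mem_iUnion.2 ⟨t.equivFin ⟨k, hk⟩, by simpa [idx] using hak⟩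

end Hereditary

section Locus

variable (P : ∀ (X : Type u) [TopologicalSpace X], Prop) {X : Type u} [TopologicalSpace X]
  {T : Type*} [TopologicalSpace T]

def pLocus (e : X → T) : Set T :=
  {t | ∃ V ∈ 𝓝 t, IsClosed V ∧ P ↥(e ⁻¹' V)}

variable {P}

theorem isOpen_pLocus (e : X → T) : IsOpen (pLocus P e) :=
  isOpen_iff_mem_nhds.2 fun _ ⟨V, hV, hVc, hVP⟩ => by
    filter_upwards [eventually_mem_nhds_iff.2 hV] with s hs using ⟨V, hs, hVc, hVP⟩

theorem range_subset_pLocus [RegularSpace T] (hPch : ClosedHereditary P) (hPinv : TopInvariant P)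
    {e : X → T} (he : IsInducing e) (hloc : ∀ x : X, ∃ N ∈ 𝓝 x, P ↥N) :
    range e ⊆ pLocus P e := by
  rintro _ ⟨x, rfl⟩
  obtain ⟨N, hN, hPN⟩ := hloc x
  rw [he.nhds_eq_comap] at hN
  obtain ⟨W, hW, hWN⟩ := mem_comap.1 hN
  obtain ⟨V, hV, hVc, hVW⟩ := exists_mem_nhds_isClosed_subset hW
  exact ⟨V, hV, hVc,
    hPch.of_subset hPinv (fun y hy => hWN (hVW hy)) (hVc.preimage he.continuous) hPN⟩

theorem preimage_of_isCompact_subset_pLocus (hPch : ClosedHereditary P) (hPinv : TopInvariant P)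
    (hPsum : PreservedFiniteClosedSums P) {e : X → T} (he : Continuous e) {K : Set T}
    (hK : IsCompact K) (hKc : IsClosed K) (hKP : K ⊆ pLocus P e) : P ↥(e ⁻¹' K) := by
  have hKP' : ∀ t ∈ K, ∃ V ∈ 𝓝 t, IsClosed V ∧ P ↥(e ⁻¹' V) := hKP
  choose! V hV hVc hVP using hKP'
  obtain ⟨t, htK, hKt⟩ := hK.elim_nhds_subcover V hV
  have hcover : P ↥(⋃ k ∈ t, e ⁻¹' V k) :=
    hPsum.biUnion_finset hPinv t (fun k hk => (hVc k (htK k hk)).preimage he)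
      fun k hk => hVP k (htK k hk)
  refine hPch.of_subset hPinv (fun x hx => ?_) (hKc.preimage he) hcover
  simpa using hKt hx

end Locus

/-- `X` with one new point, topologized by sending it to `∞` in the one-point compactification of
`S`. Adjoining the point to `X` itself rather than to the range of `f` lets `X` embed even when `f`
is merely inducing (`X` need not be T₀). -/
def OnePointExtension {X S : Type*} (_f : X → S) : Type _ := Option X

namespace OnePointExtension

variable {X S : Type*} (f : X → S)

def infty : OnePointExtension f := none

def of : X → OnePointExtension f := some

theorem of_injective : Function.Injective (of f) := Option.some_injective X

@[simp]
theorem of_ne_infty (x : X) : of f x ≠ infty f := Option.some_ne_none x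

theorem compl_range_of : (range (of f))ᶜ = {infty f} := compl_range_some X

@[elab_as_elim, induction_eliminator]
protected def rec {motive : OnePointExtension f → Sort*} (infty : motive (infty f))
    (of : ∀ x, motive (of f x)) : ∀ y, motive y
  | none => infty
  | some x => of x

def toOnePoint : OnePointExtension f → OnePoint S
  | none => OnePoint.infty
  | some x => f x

@[simp]
theorem toOnePoint_infty : toOnePoint f (infty f) = OnePoint.infty := rfl

@[simp]
theorem toOnePoint_of (x : X) : toOnePoint f (of f x) = f x := rfl

theorem preimage_toOnePoint_image_coe (K : Set S) :
    toOnePoint f ⁻¹' ((↑) '' K) = of f '' (f ⁻¹' K) := by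
  ext y
  induction y <;> simp [(of_injective f).mem_set_image]

variable [TopologicalSpace S]

instance : TopologicalSpace (OnePointExtension f) := .induced (toOnePoint f) inferInstance

theorem isInducing_toOnePoint : IsInducing (toOnePoint f) := ⟨rfl⟩

variable {f}

theorem isEmbedding_of [TopologicalSpace X] (hf : IsInducing f) : IsEmbedding (of f) :=
  ⟨(isInducing_toOnePoint f).of_comp_iff.1 (by
    exact OnePoint.isOpenEmbedding_coe.isInducing.comp hf), of_injective f⟩

instance [WeaklyLocallyCompactSpace S] [T2Space S] :
    CompletelyRegularSpace (OnePointExtension f) :=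
  (isInducing_toOnePoint f).completelyRegularSpace

theorem hasBasis_nhds_infty :
    (𝓝 (infty f)).HasBasis (fun K : Set S => IsClosed K ∧ IsCompact K)
      fun K => (of f '' (f ⁻¹' K))ᶜ := by
  rw [(isInducing_toOnePoint f).nhds_eq_comap, toOnePoint_infty]
  convert OnePoint.hasBasis_nhds_infty.comap (toOnePoint f) using 2 with K
  rw [← OnePoint.compl_image_coe, preimage_compl, preimage_toOnePoint_image_coe]

theorem isOpen_compl_image_of {K : Set S} (hK : IsClosed K ∧ IsCompact K) :
    IsOpen (of f '' (f ⁻¹' K))ᶜ := by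
  rw [← preimage_toOnePoint_image_coe, ← preimage_compl]
  exact (OnePoint.isOpen_compl_image_coe.2 hK).preimage (isInducing_toOnePoint f).continuous

theorem dense_range_of (hf : ∀ K : Set S, IsClosed K → IsCompact K → ¬ range f ⊆ K) :
    Dense (range (of f)) := by
  intro y
  induction y with
  | infty =>
    refine (mem_closure_iff_nhds_basis hasBasis_nhds_infty).2 fun K hK => ?_
    obtain ⟨_, ⟨x, rfl⟩, hx⟩ := not_subset.1 (hf K hK.1 hK.2)
    exact ⟨of f x, mem_range_self x, fun ⟨y, hy, hyx⟩ => hx (of_injective f hyx ▸ hy)⟩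
  | of x => exact subset_closure (mem_range_self x)

end OnePointExtension

section MrowkaW

variable {P : ∀ (X : Type u) [TopologicalSpace X], Prop}

theorem MrowkaW.of_hasBasis (hPW : MrowkaW P) {Y : Type u} [TopologicalSpace Y]
    [CompletelyRegularSpace Y] {p : Y} {ι : Type*} {q : ι → Prop} {s : ι → Set Y}
    (hb : (𝓝 p).HasBasis q s) (hs : ∀ i, q i → IsOpen (s i)) (hP : ∀ i, q i → P ↥(s i)ᶜ) :
    P Y := by
  refine hPW Y p {b | ∃ i, q i ∧ s i = b} ?_ (fun V hV => ?_) ?_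
  · rintro _ ⟨i, hi, rfl⟩
    exact ⟨hs i hi, mem_of_mem_nhds (hb.mem_of_mem hi)⟩
  · obtain ⟨i, hi, hiV⟩ := hb.mem_iff.1 hV
    exact ⟨s i, ⟨i, hi, rfl⟩, hiV⟩
  · rintro _ ⟨i, hi, rfl⟩
    exact hP i hi

open OnePointExtension in
theorem MrowkaW.onePointExtension (hPW : MrowkaW P) (hPinv : TopInvariant P) {X : Type u}
    [TopologicalSpace X] {S : Type*} [TopologicalSpace S] [WeaklyLocallyCompactSpace S]
    [T2Space S] {f : X → S} (hf : IsInducing f)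
    (hP : ∀ K : Set S, IsClosed K → IsCompact K → P ↥(f ⁻¹' K)) :
    P (OnePointExtension f) :=
  hPW.of_hasBasis hasBasis_nhds_infty (fun _ => isOpen_compl_image_of) fun K hK => by
    rw [compl_compl]
    exact hPinv _ _ ((isEmbedding_of hf).homeomorphImage _) (hP K hK.1 hK.2)

end MrowkaW

open OnePointExtension in
theorem one_point_extension_with_P_and_Q
    (P Q : ∀ (X : Type u) [TopologicalSpace X], Prop)
    (hPinv : TopInvariant P) (hQinv : TopInvariant Q)
    (hPch : ClosedHereditary P) (hPsum : PreservedFiniteClosedSums P) (hPW : MrowkaW P)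
    (hQch : ClosedHereditary Q) (hQW : MrowkaW Q)
    (hQcr : ∀ (Z : Type u) [TopologicalSpace Z], Q Z → CompletelyRegularSpace Z)
    (X : Type u) [TopologicalSpace X]
    (hloc : ∀ x : X, ∃ N ∈ nhds x, P ↥N)
    (hnP : ¬ P X) (hQ : Q X) :
    ∃ (Y : Type u) (_ : TopologicalSpace Y) (e : X → Y),
      Topology.IsEmbedding e ∧ Dense (Set.range e) ∧ (∃ p : Y, (Set.range e)ᶜ = {p}) ∧
      P Y ∧ Q Y := by
  have := hQcr X hQ
  have he : IsInducing (stoneCechUnit : X → StoneCech X) := isInducing_stoneCechUnit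
  let G := pLocus P (stoneCechUnit : X → StoneCech X)
  have : LocallyCompactSpace G := (isOpen_pLocus _).locallyCompactSpace
  let f : X → G := codRestrict stoneCechUnit G
    (range_subset_iff.1 (range_subset_pLocus hPch hPinv he hloc))
  have hf : IsInducing f := he.codRestrict _
  have hfP : ∀ K : Set G, IsClosed K → IsCompact K → P ↥(f ⁻¹' K) := fun K _ hK => by
    have hKG : f ⁻¹' K = stoneCechUnit ⁻¹' (Subtype.val '' K) := by
      ext x
      exact Subtype.val_injective.mem_set_image.symm
    rw [hKG]
    exact preimage_of_isCompact_subset_pLocus hPch hPinv hPsum he.continuous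
      (hK.image continuous_subtype_val) (hK.image continuous_subtype_val).isClosed
      (image_subset_iff.2 fun y _ => y.2)
  refine ⟨OnePointExtension f, inferInstance, of f, isEmbedding_of hf,
    dense_range_of fun K hKc hK hfK => hnP ?_, ⟨infty f, compl_range_of f⟩,
    hPW.onePointExtension hPinv hf hfP,
    hQW.onePointExtension hQinv hf fun K hKc _ => hQch X _ (hKc.preimage hf.continuous) hQ⟩
  exact hPinv _ _ (Homeomorph.Set.univ X) (preimage_eq_univ_iff.2 hfK ▸ hfP K hKc hK)
end

section
/- Let X be a completely regular (Tychonoff) locally-P space, where P is a closed hereditary topological property. Then X ⊆ λ_P X, where λ_P X = ⋃{ int_{βX} cl_{βX} C : C is a cozero-set of X and cl_X C has P }. -/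
universe u

/-- `C` is a cozero-set of `X`: the complement of the zero-set of a continuous real-valued
function on `X`. -/
def IsCozero (X : Type u) [TopologicalSpace X] (C : Set X) : Prop :=
  ∃ f : X → ℝ, Continuous f ∧ C = {x | f x ≠ 0}

/-- The subset `λ_P X` of the Stone–Čech compactification `βX`:
the union of the sets `int_{βX} cl_{βX} C` over all cozero-sets `C` of `X`
whose closure in `X` has `P`. -/
def lambdaSet (P : ∀ (X : Type u) [TopologicalSpace X], Prop)
    (X : Type u) [TopologicalSpace X] : Set (StoneCech X) :=
  ⋃ C ∈ {C : Set X | IsCozero X C ∧ P ↥(closure C)},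
    interior (closure (stoneCechUnit '' C))

/-!
Given `x`, choose a neighbourhood `N` with `P` and an Urysohn function `f : X → [0, 1]` with
`f x = 0` and `f = 1` off `int N`. The cozero-set `C = {f < 1/2}` has closure inside `N`, so
`cl C` has `P`. Extending `f` to `βf : βX → [0, 1]`, the open set `U = {βf < 1/2}` contains `x`
and meets `X` exactly in `C`; by density of `X` in `βX`, `U ⊆ cl_{βX} C`, hence
`x ∈ int_{βX} cl_{βX} C`.
-/

open Set Topology

theorem isCozero_setOf_lt {X : Type u} [TopologicalSpace X] {g : X → ℝ} (hg : Continuous g)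
    (a : ℝ) : IsCozero X {y | g y < a} := by
  refine ⟨fun y => max (a - g y) 0, by fun_prop, ?_⟩
  ext y
  simp only [mem_ofPred_eq, ne_eq, max_eq_right_iff, not_le, sub_pos]

theorem ClosedHereditary.of_isClosed_subset {P : ∀ (X : Type u) [TopologicalSpace X], Prop}
    (hPch : ClosedHereditary P) (hPinv : TopInvariant P) {X : Type u} [TopologicalSpace X]
    {s N : Set X} (hs : IsClosed s) (hsN : s ⊆ N) (hN : P N) : P s := by
  have hPs : P ↥(Subtype.val ⁻¹' s : Set N) :=
    hPch N _ (hs.preimage continuous_subtype_val) hN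
  refine hPinv _ _ ((IsEmbedding.subtypeVal.comp IsEmbedding.subtypeVal).toHomeomorph.trans
    (Homeomorph.setCongr ?_)) hPs
  rw [range_comp, Subtype.range_val, Subtype.image_preimage_coe, inter_eq_self_of_subset_right hsN]

theorem DenseRange.subset_interior_closure_image_preimage {α β : Type*} [TopologicalSpace β]
    {g : α → β} (hg : DenseRange g) {U : Set β} (hU : IsOpen U) :
    U ⊆ interior (closure (g '' (g ⁻¹' U))) := by
  refine interior_maximal ?_ hU
  rw [image_preimage_eq_inter_range]
  exact hg.open_subset_closure_inter hU

theorem exists_closure_setOf_lt_half_subset {X : Type u} [TopologicalSpace X]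
    [CompletelyRegularSpace X] {x : X} {N : Set X} (hN : N ∈ 𝓝 x) :
    ∃ f : X → unitInterval, Continuous f ∧ f x = 0 ∧ closure {y | (f y : ℝ) < 1 / 2} ⊆ N := by
  obtain ⟨f, hf, hfx, hf_one⟩ := CompletelyRegularSpace.completely_regular x (interior N)ᶜ
    isOpen_interior.isClosed_compl (by simpa using mem_interior_iff_mem_nhds.mpr hN)
  refine ⟨f, hf, hfx, fun y hy => interior_subset ?_⟩
  have hy_le : (f y : ℝ) ≤ 1 / 2 :=
    closure_minimal (fun z (hz : (f z : ℝ) < 1 / 2) => hz.le)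
      (isClosed_le (continuous_subtype_val.comp hf) continuous_const) hy
  by_contra hyN
  have hy_one : (f y : ℝ) = 1 := by simp [hf_one hyN]
  linarith

theorem subset_lambdaSet_of_locallyP
    (P : ∀ (X : Type u) [TopologicalSpace X], Prop)
    (hPinv : TopInvariant P) (hPch : ClosedHereditary P)
    (X : Type u) [TopologicalSpace X] [T35Space X]
    (hloc : ∀ x : X, ∃ N ∈ nhds x, P ↥N) :
    Set.range (stoneCechUnit : X → StoneCech X) ⊆ lambdaSet P X := by
  rintro _ ⟨x, rfl⟩
  obtain ⟨N, hN, hPN⟩ := hloc x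
  obtain ⟨f, hf, hfx, hclN⟩ := exists_closure_setOf_lt_half_subset hN
  set U : Set (StoneCech X) := {z | ((stoneCechExtend hf z : unitInterval) : ℝ) < 1 / 2}
  have hU : IsOpen U :=
    isOpen_lt (continuous_subtype_val.comp (continuous_stoneCechExtend hf)) continuous_const
  have hpre : stoneCechUnit ⁻¹' U = {y | (f y : ℝ) < 1 / 2} := by
    ext y
    simp only [U, mem_preimage, mem_ofPred_eq, stoneCechExtend_stoneCechUnit]
  have hxU : stoneCechUnit x ∈ U := by
    rw [← mem_preimage, hpre, mem_ofPred_eq, hfx]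
    norm_num
  refine mem_biUnion ⟨isCozero_setOf_lt (by fun_prop) _,
    hPch.of_isClosed_subset hPinv isClosed_closure hclN hPN⟩ ?_
  rw [← hpre]
  exact denseRange_stoneCechUnit.subset_interior_closure_image_preimage hU hxU
end

section
/- Let P be a topological property preserved under finite closed sums, and let X be a completely regular (Tychonoff) space that does not have P. Then λ_P X ≠ βX, where λ_P X = ⋃{ int_{βX} cl_{βX} C : C is a cozero-set of X and cl_X C has P }. -/
/-! Compactness of `βX` extracts a finite subcover from `λ_P X = βX`. Since `X → βX` is an
inducing map, every point of `X` lying in `cl_{βX} C` lies in `cl_X C`, so `X` is a finite union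
of the closed sets `cl_X C`, each having `P`; hence `X` has `P`. -/

universe u

open Set

lemma PreservedFiniteClosedSums.of_finite_cover {P : ∀ (X : Type u) [TopologicalSpace X], Prop}
    (hP : PreservedFiniteClosedSums P) {X : Type u} [TopologicalSpace X] {ι : Type*} [Finite ι]
    (F : ι → Set X) (hF : ∀ i, IsClosed (F i)) (hFP : ∀ i, P (F i)) (hcover : ⋃ i, F i = univ) :
    P X := by
  obtain ⟨n, ⟨e⟩⟩ := Finite.exists_equiv_fin ι
  exact hP X n (F ∘ e.symm) (fun _ => hF _) (fun _ => hFP _)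
    ((e.symm.surjective.iUnion_comp F).trans hcover)

lemma exists_finite_closure_cover_of_lambdaSet_eq_univ
    {P : ∀ (X : Type u) [TopologicalSpace X], Prop} {X : Type u} [TopologicalSpace X]
    [CompletelyRegularSpace X] (h : lambdaSet P X = univ) :
    ∃ S : Set (Set X), S.Finite ∧ (∀ C ∈ S, P (closure C)) ∧ ⋃ C ∈ S, closure C = univ := by
  obtain ⟨S, hS, hSfin, hScover⟩ := isCompact_univ.elim_finite_subcover_image
    (fun _ _ => isOpen_interior) (h ▸ Subset.rfl : univ ⊆ lambdaSet P X)
  refine ⟨S, hSfin, fun C hC => (hS hC).2, eq_univ_of_forall fun x => ?_⟩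
  obtain ⟨C, hC, hxC⟩ := mem_iUnion₂.mp (hScover (mem_univ (stoneCechUnit x)))
  refine mem_iUnion₂.mpr ⟨C, hC, ?_⟩
  rw [isInducing_stoneCechUnit.closure_eq_preimage_closure_image]
  exact mem_preimage.mpr (interior_subset hxC)

theorem lambdaSet_ne_univ_of_not_P_general
    (P : ∀ (X : Type u) [TopologicalSpace X], Prop)
    (hPsum : PreservedFiniteClosedSums P)
    (X : Type u) [TopologicalSpace X] [T35Space X]
    (hnP : ¬ P X) :
    lambdaSet P X ≠ Set.univ := by
  intro h
  obtain ⟨S, hSfin, hSP, hScover⟩ := exists_finite_closure_cover_of_lambdaSet_eq_univ h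
  have : Finite S := hSfin.to_subtype
  rw [biUnion_eq_iUnion] at hScover
  exact hnP (hPsum.of_finite_cover (fun C : S => closure (C : Set X))
    (fun _ => isClosed_closure) (fun C => hSP C C.2) hScover)

theorem lambdaSet_ne_univ_of_not_P
    (P : ∀ (X : Type u) [TopologicalSpace X], Prop)
    (hPinv : TopInvariant P) (hPsum : PreservedFiniteClosedSums P)
    (X : Type u) [TopologicalSpace X] [T35Space X]
    (hnP : ¬ P X) :
    lambdaSet P X ≠ Set.univ :=
  lambdaSet_ne_univ_of_not_P_general P hPsum X hnP
end

section
/- Every completely regular Hausdorff (Tychonoff) space X that is locally Lindelöf (every point has a Lindelöf neighborhood) but not Lindelöf has a one-point extension Y (a space containing X as a dense subspace with Y \ X a singleton) that is Tychonoff and Lindelöf. -/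
universe u

open Topology Set Filter unitInterval

/-- `stoneCechUnit` is an embedding for T3.5 spaces. -/
theorem aux_isEmbedding_stoneCechUnit {X : Type u} [TopologicalSpace X] [T35Space X] :
    Topology.IsEmbedding (stoneCechUnit : X → StoneCech X) := by
  refine ⟨isInducing_iff_nhds.mpr fun x => le_antisymm
    ((continuous_stoneCechUnit.tendsto x).le_comap) ?_, injective_stoneCechUnit_of_t35Space⟩
  intro s hs
  obtain ⟨U, hUs, hUo, hxU⟩ := mem_nhds_iff.mp hs
  obtain ⟨f, fc, fx0, fK1⟩ := CompletelyRegularSpace.completely_regular x Uᶜ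
    hUo.isClosed_compl (by simpa)
  have hg : Continuous (stoneCechExtend fc) := continuous_stoneCechExtend fc
  refine mem_comap.mpr ⟨stoneCechExtend fc ⁻¹' {1}ᶜ, ?_, ?_⟩
  · refine ((isClosed_singleton.preimage hg).isOpen_compl.mem_nhds ?_)
    have hx1 : stoneCechExtend fc (stoneCechUnit x) = f x :=
      congrFun (stoneCechExtend_extends fc) x
    simp only [Set.mem_compl_iff, Set.mem_preimage, Set.mem_singleton_iff, hx1, fx0]
    exact zero_ne_one
  · intro y hy
    have hy1 : stoneCechExtend fc (stoneCechUnit y) = f y :=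
      congrFun (stoneCechExtend_extends fc) y
    simp only [Set.mem_preimage, Set.mem_compl_iff, Set.mem_singleton_iff, hy1] at hy
    have hyU : y ∈ U := by
      by_contra hyc
      exact hy (fK1 hyc)
    exact hUs hyU

/-- Subspaces of T3.5 spaces are T3.5. -/
theorem aux_t35_subtype {Z : Type u} [TopologicalSpace Z] [T35Space Z] (S : Set Z) :
    T35Space S := by
  haveI : CompletelyRegularSpace S := by
    constructor
    intro x K hK hx
    obtain ⟨K', hK', hKeq⟩ := isClosed_induced_iff.mp hK
    obtain ⟨f, fc, fx0, fK1⟩ := CompletelyRegularSpace.completely_regular (x : Z) K' hK'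
      (fun h => hx (by rw [← hKeq]; exact h))
    exact ⟨f ∘ Subtype.val, fc.comp continuous_subtype_val, fx0,
      fun y hy => fK1 (by rw [← hKeq] at hy; exact hy)⟩
  exact {}

/-- The setoid collapsing a set `F` to a single point. -/
def collapseSetoid {β : Type u} (F : Set β) : Setoid β :=
  ⟨fun a b => a = b ∨ (a ∈ F ∧ b ∈ F),
   ⟨fun _ => Or.inl rfl,
    fun h => h.elim (fun h => Or.inl h.symm) (fun h => Or.inr ⟨h.2, h.1⟩),
    fun h1 h2 => by
      rcases h1 with rfl | ⟨ha, hb⟩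
      · exact h2
      · rcases h2 with rfl | ⟨_, hc⟩
        · exact Or.inr ⟨ha, hb⟩
        · exact Or.inr ⟨ha, hc⟩⟩⟩

theorem one_point_lindelof_extension
    (X : Type u) [TopologicalSpace X] [T35Space X]
    (hloc : ∀ x : X, ∃ N ∈ nhds x, IsLindelof N)
    (hnl : ¬ LindelofSpace X) :
    ∃ (Y : Type u) (_ : TopologicalSpace Y) (e : X → Y),
      Topology.IsEmbedding e ∧ Dense (Set.range e) ∧ (∃ p : Y, (Set.range e)ᶜ = {p}) ∧
      T35Space Y ∧ LindelofSpace Y := by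
  classical
  set β := StoneCech X with hβdef
  set η : X → β := stoneCechUnit with hηdef
  have hη : Topology.IsEmbedding η := aux_isEmbedding_stoneCechUnit
  set 𝒵 : Set (Set X) := {Z | IsClosed Z ∧ IsLindelof Z} with h𝒵def
  set O : Set β := ⋃ Z ∈ 𝒵, interior (closure (η '' Z)) with hOdef
  have hOopen : IsOpen O := isOpen_biUnion fun _ _ => isOpen_interior
  -- every point of X has a closed Lindelöf neighborhood, hence `range η ⊆ O`
  have hrange : ∀ x : X, η x ∈ O := by
    intro x
    obtain ⟨N, hN, hNL⟩ := hloc x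
    obtain ⟨f, fc, fx0, fK1⟩ := CompletelyRegularSpace.completely_regular x (interior N)ᶜ
      isOpen_interior.isClosed_compl
      (fun hc => hc (mem_interior_iff_mem_nhds.mpr hN))
    have hfc : Continuous fun y => (f y : ℝ) := continuous_subtype_val.comp fc
    set Z : Set X := (fun y => (f y : ℝ)) ⁻¹' Set.Iic (1/2) with hZdef
    have hZcl : IsClosed Z := isClosed_Iic.preimage hfc
    have hZN : Z ⊆ N := by
      intro y hy
      have hyN : y ∈ interior N := by
        by_contra hyc
        have h1 : f y = 1 := fK1 hyc
        have h2 : (f y : ℝ) ≤ 1/2 := hy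
        rw [h1] at h2
        norm_num at h2
      exact interior_subset hyN
    have hZL : IsLindelof Z := hNL.of_isClosed_subset hZcl hZN
    have hZmem : Z ∈ 𝒵 := ⟨hZcl, hZL⟩
    have hxint : x ∈ interior Z := by
      have hsub : (fun y => (f y : ℝ)) ⁻¹' Set.Iio (1/2) ⊆ Z := by
        intro y hy
        show (f y : ℝ) ≤ 1/2
        exact le_of_lt hy
      have hxmem : x ∈ (fun y => (f y : ℝ)) ⁻¹' Set.Iio (1/2) := by
        simp only [Set.mem_preimage, Set.mem_Iio, fx0]
        norm_num
      exact interior_maximal hsub (isOpen_Iio.preimage hfc) hxmem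
    obtain ⟨V, hVo, hVeq⟩ := hη.isInducing.isOpen_iff.mp (isOpen_interior (s := Z))
    have hxV : η x ∈ V := by rw [← hVeq] at hxint; exact hxint
    have hVsub : V ⊆ closure (η '' Z) := by
      have hd : Dense (Set.range η) := denseRange_stoneCechUnit
      refine (hd.open_subset_closure_inter hVo).trans (closure_mono ?_)
      rintro b ⟨hbV, y, rfl⟩
      have : y ∈ interior Z := by rw [← hVeq]; exact hbV
      exact ⟨y, interior_subset this, rfl⟩
    exact Set.mem_biUnion hZmem (interior_maximal hVsub hVo hxV)
  set F : Set β := Oᶜ with hFdef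
  have hFc : IsClosed F := hOopen.isClosed_compl
  -- F is nonempty since X is not Lindelöf
  have hFne : F.Nonempty := by
    rw [Set.nonempty_iff_ne_empty]
    intro hFe
    have hcov : (Set.univ : Set β) ⊆ ⋃ Z ∈ 𝒵, interior (closure (η '' Z)) := by
      intro b _
      have hbO : b ∈ O := by
        by_contra hb
        exact absurd (show b ∈ F from hb) (by rw [hFe]; exact Set.notMem_empty b)
      rw [hOdef] at hbO; exact hbO
    obtain ⟨𝒵', hsub, hfin, hcov'⟩ := isCompact_univ.elim_finite_subcover_image
      (fun Z _ => isOpen_interior) hcov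
    apply hnl
    rw [← isLindelof_univ_iff]
    have huniv : (Set.univ : Set X) = ⋃ Z ∈ 𝒵', Z := by
      refine Set.Subset.antisymm ?_ (Set.subset_univ _)
      intro x _
      obtain ⟨Z, hZ, hxZ⟩ := Set.mem_iUnion₂.mp (hcov' (Set.mem_univ (η x)))
      refine Set.mem_biUnion hZ ?_
      have h1 : η x ∈ closure (η '' Z) := interior_subset hxZ
      have h2 : x ∈ closure Z := by
        rw [hη.isInducing.closure_eq_preimage_closure_image]; exact h1
      rwa [(hsub hZ).1.closure_eq] at h2
    rw [huniv]
    exact hfin.isLindelof_biUnion fun Z hZ => (hsub hZ).2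
  obtain ⟨p0, hp0⟩ := hFne
  -- the quotient collapsing F to a point
  set r : Setoid β := collapseSetoid F with hrdef
  set q : β → Quotient r := Quotient.mk r with hqdef
  have hqc : Continuous q := continuous_coinduced_rng
  have hqeq : ∀ {a b : β}, q a = q b → a = b ∨ (a ∈ F ∧ b ∈ F) := fun h => Quotient.exact h
  have hqsound : ∀ {a b : β}, a ∈ F → b ∈ F → q a = q b :=
    fun ha hb => Quotient.sound (Or.inr ⟨ha, hb⟩)
  have hsat : ∀ U : Set β, IsOpen U → (F ⊆ U ∨ U ∩ F = ∅) → IsOpen (q '' U) := by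
    intro U hUo hUF
    have hpre : q ⁻¹' (q '' U) = U := by
      refine Set.Subset.antisymm ?_ (Set.subset_preimage_image q U)
      rintro a ⟨b, hbU, hab⟩
      rcases hqeq hab with rfl | ⟨hbF, haF⟩
      · exact hbU
      · rcases hUF with hFU | hUF
        · exact hFU haF
        · exact (Set.eq_empty_iff_forall_notMem.mp hUF b ⟨hbU, hbF⟩).elim
    refine isOpen_coinduced.mpr ?_
    show IsOpen (q ⁻¹' (q '' U))
    rw [hpre]
    exact hUo
  have hdisjimg : ∀ {u v : Set β}, Disjoint u v → (u ∩ F = ∅ ∨ v ∩ F = ∅) →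
      Disjoint (q '' u) (q '' v) := by
    intro u v huv hF'
    rw [Set.disjoint_left]
    rintro z ⟨x, hxu, rfl⟩ ⟨y, hyv, hyx⟩
    rcases hqeq hyx with rfl | ⟨hyF, hxF⟩
    · exact Set.disjoint_left.mp huv hxu hyv
    · rcases hF' with h | h
      · exact Set.eq_empty_iff_forall_notMem.mp h x ⟨hxu, hxF⟩
      · exact Set.eq_empty_iff_forall_notMem.mp h y ⟨hyv, hyF⟩
  haveI hQT2 : T2Space (Quotient r) := by
    constructor
    intro a' b'
    refine Quotient.inductionOn₂ a' b' fun a b hab => ?_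
    have hne : a ≠ b := fun h => hab (by rw [h])
    have hnotF : ¬(a ∈ F ∧ b ∈ F) := fun h => hab (hqsound h.1 h.2)
    by_cases haF : a ∈ F
    · have hbF : b ∉ F := fun h => hnotF ⟨haF, h⟩
      obtain ⟨u, v, huo, hvo, hFu, hbv, huv⟩ := normal_separation hFc isClosed_singleton
        (Set.disjoint_singleton_right.mpr hbF)
      have hvF : v ∩ F = ∅ := by
        rw [Set.eq_empty_iff_forall_notMem]
        rintro z ⟨hzv, hzF⟩
        exact Set.disjoint_left.mp huv (hFu hzF) hzv
      exact ⟨q '' u, q '' v, hsat u huo (Or.inl hFu), hsat v hvo (Or.inr hvF),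
        ⟨a, hFu haF, rfl⟩, ⟨b, hbv rfl, rfl⟩, hdisjimg huv (Or.inr hvF)⟩
    · by_cases hbF : b ∈ F
      · obtain ⟨u, v, huo, hvo, hFu, hav, huv⟩ := normal_separation hFc isClosed_singleton
          (Set.disjoint_singleton_right.mpr haF)
        have hvF : v ∩ F = ∅ := by
          rw [Set.eq_empty_iff_forall_notMem]
          rintro z ⟨hzv, hzF⟩
          exact Set.disjoint_left.mp huv (hFu hzF) hzv
        exact ⟨q '' v, q '' u, hsat v hvo (Or.inr hvF), hsat u huo (Or.inl hFu),
          ⟨a, hav rfl, rfl⟩, ⟨b, hFu hbF, rfl⟩,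
          (hdisjimg huv (Or.inr hvF)).symm⟩
      · obtain ⟨u, v, huo, hvo, hau, hFbv, huv⟩ := normal_separation isClosed_singleton
          (hFc.union isClosed_singleton)
          (by
            rw [Set.disjoint_singleton_left]
            rintro (h | h)
            · exact haF h
            · exact hne h)
        have huF : u ∩ F = ∅ := by
          rw [Set.eq_empty_iff_forall_notMem]
          rintro z ⟨hzu, hzF⟩
          exact Set.disjoint_left.mp huv hzu (hFbv (Or.inl hzF))
        exact ⟨q '' u, q '' v, hsat u huo (Or.inr huF),
          hsat v hvo (Or.inl fun z hz => hFbv (Or.inl hz)),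
          ⟨a, hau rfl, rfl⟩, ⟨b, hFbv (Or.inr rfl), rfl⟩, hdisjimg huv (Or.inl huF)⟩
  haveI : CompactSpace (Quotient r) := Quotient.compactSpace
  haveI hQ35 : T35Space (Quotient r) := inferInstance
  -- the one-point extension
  set S : Set (Quotient r) := insert (q p0) (Set.range (q ∘ η)) with hSdef
  let e : X → S := fun x => ⟨q (η x), Set.mem_insert_iff.mpr (Or.inr ⟨x, rfl⟩)⟩
  -- q ∘ η is an embedding
  have hqηinj : Function.Injective (q ∘ η) := by
    intro a b h
    rcases hqeq h with h' | ⟨h1, _⟩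
    · exact hη.injective h'
    · exact absurd (hrange a) h1
  have hqη : Topology.IsEmbedding (q ∘ η) := by
    refine ⟨isInducing_iff_nhds.mpr fun x => le_antisymm
      (((hqc.comp hη.continuous).tendsto x).le_comap) ?_, hqηinj⟩
    intro s hs
    obtain ⟨U, hUs, hUo, hxU⟩ := mem_nhds_iff.mp hs
    obtain ⟨V, hVo, hVeq⟩ := hη.isInducing.isOpen_iff.mp hUo
    have hVOF : (V ∩ O) ∩ F = ∅ := by
      rw [Set.eq_empty_iff_forall_notMem]
      rintro z ⟨⟨_, hzO⟩, hzF⟩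
      exact hzF hzO
    refine mem_comap.mpr ⟨q '' (V ∩ O), ?_, ?_⟩
    · refine (hsat (V ∩ O) (hVo.inter hOopen) (Or.inr hVOF)).mem_nhds ?_
      exact ⟨η x, ⟨by rw [← hVeq] at hxU; exact hxU, hrange x⟩, rfl⟩
    · rintro y hy
      obtain ⟨w, ⟨hwV, hwO⟩, hw⟩ := hy
      rcases hqeq hw with h' | ⟨h1, _⟩
      · have hyV : η y ∈ V := by rw [← h']; exact hwV
        have : y ∈ U := by rw [← hVeq]; exact hyV
        exact hUs this
      · exact absurd h1 (fun h => h hwO)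
  have heC : Continuous e := Continuous.subtype_mk (hqc.comp hη.continuous) _
  have he : Topology.IsEmbedding e :=
    ⟨Topology.IsInducing.of_comp heC continuous_subtype_val hqη.isInducing,
     fun a b h => hqηinj (congrArg Subtype.val h)⟩
  refine ⟨S, inferInstance, e, he, ?_, ?_, aux_t35_subtype S, ?_⟩
  -- density
  · intro y
    rw [closure_subtype]
    have hval : Subtype.val '' Set.range e = Set.range (q ∘ η) := by
      rw [← Set.range_comp]; rfl
    rw [hval]
    have hd : DenseRange (q ∘ η) := by
      have hqsurj : Function.Surjective q := fun z => Quotient.inductionOn z fun a => ⟨a, rfl⟩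
      exact DenseRange.comp hqsurj.denseRange denseRange_stoneCechUnit hqc
    exact hd _
  -- the complement of the range is a single point
  · refine ⟨⟨q p0, Set.mem_insert _ _⟩, ?_⟩
    ext y
    simp only [Set.mem_compl_iff, Set.mem_range, Set.mem_singleton_iff]
    constructor
    · intro hy
      rcases Set.mem_insert_iff.mp y.2 with h | ⟨x, hx⟩
      · exact Subtype.ext h
      · exact absurd ⟨x, Subtype.ext hx⟩ hy
    · rintro rfl ⟨x, hx⟩
      have hx' : q (η x) = q p0 := congrArg Subtype.val hx
      rcases hqeq hx' with h | ⟨h1, _⟩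
      · exact (h.symm ▸ hp0 : η x ∈ F) (hrange x)
      · exact h1 (hrange x)
  -- Lindelöfness
  · rw [← isLindelof_univ_iff]
    apply isLindelof_of_countable_subcover
    intro ι U hUo hUc
    have hpY : (⟨q p0, Set.mem_insert _ _⟩ : S) ∈ ⋃ i, U i := hUc (Set.mem_univ _)
    obtain ⟨i₀, hi₀⟩ := Set.mem_iUnion.mp hpY
    obtain ⟨V, hVo, hVeq⟩ := isOpen_induced_iff.mp (hUo i₀)
    have hqp0V : q p0 ∈ V := by
      have : (⟨q p0, Set.mem_insert _ _⟩ : S) ∈ Subtype.val ⁻¹' V := by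
        rw [hVeq]; exact hi₀
      exact this
    have hFW : F ⊆ q ⁻¹' V := by
      intro f' hf'
      have : q f' = q p0 := hqsound hf' hp0
      simp only [Set.mem_preimage, this]
      exact hqp0V
    have hK : IsCompact (q ⁻¹' V)ᶜ := (hVo.preimage hqc).isClosed_compl.isCompact
    have hKO : (q ⁻¹' V)ᶜ ⊆ ⋃ Z ∈ 𝒵, interior (closure (η '' Z)) := by
      intro b hb
      have hbO : b ∈ O := by
        by_contra hbO
        exact hb (hFW hbO)
      rw [hOdef] at hbO; exact hbO
    obtain ⟨𝒵', h𝒵'sub, h𝒵'fin, hKcov⟩ := hK.elim_finite_subcover_image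
      (fun Z _ => isOpen_interior) hKO
    have hD : IsLindelof (⋃ Z ∈ 𝒵', Z) :=
      h𝒵'fin.isLindelof_biUnion fun Z hZ => (h𝒵'sub hZ).2
    have hL : IsLindelof (e '' ⋃ Z ∈ 𝒵', Z) := hD.image heC
    obtain ⟨t, htc, htcov⟩ := hL.elim_countable_subcover U hUo
      (fun y _ => hUc (Set.mem_univ y))
    refine ⟨insert i₀ t, htc.insert i₀, fun y _ => ?_⟩
    by_cases hy : y ∈ U i₀
    · exact Set.mem_biUnion (Set.mem_insert _ _) hy
    · rcases Set.mem_insert_iff.mp y.2 with h | ⟨x, hx⟩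
      · refine absurd ?_ hy
        rw [← hVeq]
        show (y : Quotient r) ∈ V
        rw [h]
        exact hqp0V
      · have hxV : η x ∈ (q ⁻¹' V)ᶜ := by
          intro hc
          apply hy
          rw [← hVeq]
          show (y : Quotient r) ∈ V
          rw [← hx]
          exact hc
        obtain ⟨Z, hZ, hxZ⟩ := Set.mem_iUnion₂.mp (hKcov hxV)
        have hxZ' : x ∈ Z := by
          have h1 : η x ∈ closure (η '' Z) := interior_subset hxZ
          have h2 : x ∈ closure Z := by
            rw [hη.isInducing.closure_eq_preimage_closure_image]; exact h1
          rwa [(h𝒵'sub hZ).1.closure_eq] at h2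
        have hyL : y ∈ e '' ⋃ Z ∈ 𝒵', Z :=
          ⟨x, Set.mem_biUnion hZ hxZ', Subtype.ext hx⟩
        obtain ⟨i, hi, hyi⟩ := Set.mem_iUnion₂.mp (htcov hyL)
        exact Set.mem_biUnion (Set.mem_insert_of_mem _ hi) hyi
end

section
/- Every completely regular Hausdorff (Tychonoff) space X that is locally countably compact (every point has a countably compact neighborhood) but not countably compact has a one-point extension Y (a space containing X as a dense subspace with Y \ X a singleton) that is Tychonoff and countably compact. -/
/-!
Let `C ⊆ βX` be the set of points having a neighbourhood `closure M` (closure in `βX`) for some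
closed countably compact `M ⊆ X`. It is open, contains `X` by local countable compactness, and
every compact `K ⊆ C` meets `X` in a countably compact set: `K` is covered by finitely many such
closures, and `X ∩ closure M = M`. Let `Y = X ∪ {∞}` inside the one-point compactification of
the locally compact space `C`. An open set around `∞` misses only a compact subset of `C`, so its
complement in `Y` is countably compact. Since `X` is not countably compact, `C` is not compact,
so `∞` lies in the closure of `X`.
-/

universe u

/-- A space is countably compact if every countable open cover has a finite subcover. -/
def CountablyCompact (X : Type u) [TopologicalSpace X] : Prop :=
  ∀ U : ℕ → Set X, (∀ n, IsOpen (U n)) → (⋃ n, U n) = Set.univ →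
    ∃ t : Finset ℕ, (⋃ n ∈ t, U n) = Set.univ

open Set Topology Filter
open scoped OnePoint

theorem countablyCompact_iff_countablyCompactSpace {X : Type u} [TopologicalSpace X] :
    CountablyCompact X ↔ CountablyCompactSpace X := by
  rw [← isCountablyCompact_univ_iff, isCountablyCompact_iff_countable_open_cover]
  simp only [CountablyCompact, univ_subset_iff]

theorem isCountablyCompact_iff_countablyCompact {X : Type u} [TopologicalSpace X] {s : Set X} :
    IsCountablyCompact s ↔ CountablyCompact s := by
  rw [isCountablyCompact_iff_countablyCompactSpace, countablyCompact_iff_countablyCompactSpace]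

theorem countablyCompactSpace_of_isCountablyCompact_compl {X : Type*} [TopologicalSpace X]
    (p : X) (h : ∀ V, IsOpen V → p ∈ V → IsCountablyCompact Vᶜ) :
    CountablyCompactSpace X := by
  refine ⟨fun f _ _ _ => ?_⟩
  by_cases hp : ClusterPt p f
  · exact ⟨p, mem_univ p, hp⟩
  obtain ⟨V, ⟨hpV, hV⟩, hVf⟩ :=
    (nhds_basis_opens p).disjoint_iff_left.1 (not_not.1 (mt clusterPt_iff_not_disjoint.2 hp))
  obtain ⟨x, -, hx⟩ := h V hV hpV (le_principal_iff.2 hVf)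
  exact ⟨x, mem_univ x, hx⟩

section CountablyCompactLocus

variable {X Z : Type*} [TopologicalSpace X] [TopologicalSpace Z] {u : X → Z}

def countablyCompactLocus (u : X → Z) : Set Z :=
  {z | ∃ M : Set X, IsClosed M ∧ IsCountablyCompact M ∧ closure (u '' M) ∈ 𝓝 z}

theorem isOpen_countablyCompactLocus : IsOpen (countablyCompactLocus u) :=
  isOpen_iff_mem_nhds.2 fun _ ⟨M, hM, hMc, hz⟩ =>
    (eventually_mem_nhds_iff.2 hz).mono fun _ hz' => ⟨M, hM, hMc, hz'⟩

theorem Topology.IsDenseInducing.range_subset_countablyCompactLocus [RegularSpace X]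
    (hu : IsDenseInducing u) (hloc : ∀ x : X, ∃ N ∈ 𝓝 x, IsCountablyCompact N) :
    range u ⊆ countablyCompactLocus u := by
  rintro _ ⟨x, rfl⟩
  obtain ⟨N, hN, hNcc⟩ := hloc x
  obtain ⟨M, hM, hMc, hMN⟩ := exists_mem_nhds_isClosed_subset hN
  exact ⟨M, hMc, hNcc.of_isClosed_subset hMc hMN, hu.closure_image_mem_nhds hM⟩

theorem Topology.IsInducing.isCountablyCompact_preimage [T2Space Z] (hu : IsInducing u)
    {K : Set Z} (hK : IsCompact K) (hKC : K ⊆ countablyCompactLocus u) :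
    IsCountablyCompact (u ⁻¹' K) := by
  suffices ∃ M, IsCountablyCompact M ∧ u ⁻¹' K ⊆ M by
    obtain ⟨M, hMc, hKM⟩ := this
    exact hMc.of_isClosed_subset (hK.isClosed.preimage hu.continuous) hKM
  refine hK.induction_on ⟨∅, isCountablyCompact_empty, by simp⟩
    (fun s t hst ⟨M, hMc, htM⟩ => ⟨M, hMc, (preimage_mono hst).trans htM⟩)
    (fun s t ⟨M, hMc, hsM⟩ ⟨N, hNc, htN⟩ =>
      ⟨M ∪ N, hMc.union hNc, union_subset_union hsM htN⟩)
    fun z hz => ?_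
  obtain ⟨M, hM, hMc, hzM⟩ := hKC hz
  refine ⟨closure (u '' M), mem_nhdsWithin_of_mem_nhds hzM, M, hMc, ?_⟩
  rw [← hu.closure_eq_preimage_closure_image, hM.closure_eq]

theorem Topology.IsInducing.noncompactSpace_countablyCompactLocus [T2Space Z]
    (hu : IsInducing u) (hXC : ∀ x, u x ∈ countablyCompactLocus u)
    (hX : ¬CountablyCompactSpace X) :
    NoncompactSpace (countablyCompactLocus u) := by
  refine ⟨fun hC => hX (isCountablyCompact_univ_iff.1 ?_)⟩
  rw [← preimage_eq_univ_iff.2 (range_subset_iff.2 hXC)]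
  exact hu.isCountablyCompact_preimage (isCompact_iff_compactSpace.2 ⟨hC⟩) subset_rfl

end CountablyCompactLocus

theorem Topology.IsEmbedding.exists_countablyCompact_onePoint_extension {X W : Type u}
    [TopologicalSpace X] [TopologicalSpace W] [T35Space W] {e : X → W} (he : IsEmbedding e)
    {p : W} (hpe : p ∉ range e) (hp : p ∈ closure (range e))
    (hcc : ∀ V, IsOpen V → p ∈ V → IsCountablyCompact (e ⁻¹' Vᶜ)) :
    ∃ (Y : Type u) (_ : TopologicalSpace Y) (e : X → Y),
      IsEmbedding e ∧ Dense (range e) ∧ (∃ p : Y, (range e)ᶜ = {p}) ∧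
      T35Space Y ∧ CountablyCompact Y := by
  set S : Set W := insert p (range e)
  have heS : ∀ x, e x ∈ S := fun x => mem_insert_of_mem p (mem_range_self x)
  have he' : IsEmbedding (S.codRestrict e heS) := he.codRestrict S heS
  have hrange : Subtype.val '' range (S.codRestrict e heS) = range e := by
    rw [← range_comp]; rfl
  refine ⟨S, inferInstance, S.codRestrict e heS, he', ?_, ⟨⟨p, mem_insert p _⟩, ?_⟩,
    inferInstance, countablyCompact_iff_countablyCompactSpace.2 ?_⟩
  · rw [IsInducing.subtypeVal.dense_iff, hrange]
    rintro ⟨y, rfl | hy⟩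
    exacts [hp, subset_closure hy]
  · ext ⟨y, rfl | ⟨x, rfl⟩⟩
    · simpa [Subtype.ext_iff] using hpe
    · simpa [Subtype.ext_iff] using fun h => hpe ⟨x, h⟩
  refine countablyCompactSpace_of_isCountablyCompact_compl ⟨p, mem_insert p _⟩
    fun V hV hpV => ?_
  obtain ⟨V', hV', rfl⟩ := isOpen_induced_iff.1 hV
  refine ((hcc V' hV' hpV).image he'.continuous).of_isClosed_subset hV.isClosed_compl ?_
  rintro ⟨y, rfl | ⟨x, rfl⟩⟩ hyV
  exacts [absurd hpV hyV, ⟨x, hyV, rfl⟩]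

theorem one_point_countably_compact_extension
    (X : Type u) [TopologicalSpace X] [T35Space X]
    (hloc : ∀ x : X, ∃ N ∈ nhds x, CountablyCompact ↥N)
    (hncc : ¬ CountablyCompact X) :
    ∃ (Y : Type u) (_ : TopologicalSpace Y) (e : X → Y),
      Topology.IsEmbedding e ∧ Dense (Set.range e) ∧ (∃ p : Y, (Set.range e)ᶜ = {p}) ∧
      T35Space Y ∧ CountablyCompact Y := by
  have hu := isDenseEmbedding_stoneCechUnit (X := X)
  set C := countablyCompactLocus (stoneCechUnit : X → StoneCech X)
  have hXC : ∀ x, stoneCechUnit x ∈ C := fun x =>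
    hu.isDenseInducing.range_subset_countablyCompactLocus
      (fun x => (hloc x).imp fun _ => .imp_right isCountablyCompact_iff_countablyCompact.2)
      (mem_range_self x)
  have : LocallyCompactSpace C := isOpen_countablyCompactLocus.locallyCompactSpace
  have : NoncompactSpace C := hu.isInducing.noncompactSpace_countablyCompactLocus hXC
    (mt countablyCompact_iff_countablyCompactSpace.2 hncc)
  set u' := C.codRestrict stoneCechUnit hXC
  have hu' : DenseRange u' := by
    simpa [DenseRange, u', range_codRestrict] using
      hu.dense.preimage (isOpen_countablyCompactLocus (u := stoneCechUnit)).isOpenMap_subtype_val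
  have hcc (V : Set (OnePoint C)) (hV : IsOpen V) (hpV : ∞ ∈ V) :
      IsCountablyCompact (((↑) ∘ u') ⁻¹' Vᶜ) := by
    obtain ⟨hVc, hK⟩ := (OnePoint.isOpen_iff_of_mem hpV).1 hV
    refine (hu.isInducing.isCountablyCompact_preimage (hK.image continuous_subtype_val)
      ((image_subset_range _ _).trans Subtype.range_coe.subset)).of_isClosed_subset
      (hVc.preimage (hu.continuous.codRestrict hXC)) fun x hx => ⟨_, hx, rfl⟩
  exact (OnePoint.isOpenEmbedding_coe.isEmbedding.comp (hu.isEmbedding.codRestrict C hXC))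
    |>.exists_countablyCompact_onePoint_extension
      (by rintro ⟨x, hx⟩; exact OnePoint.coe_ne_infty _ hx)
      ((OnePoint.denseRange_coe.comp hu' OnePoint.continuous_coe) ∞) hcc
end
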